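/- arXiv:2106.10001 — 12 statements merged into one kernel-verified Lean document; each statement's English description precedes it below -/
import Mathlib

section
/- For every positive integer k, with f_2(k) = -2(2k-1/2)^2 - 3/2, the inequality 1/(f_2(k)+1) - 1/(f_2(k+1)+1) < -1/(2k)^2 + 1/(2k+1)^2 < 1/f_2(k) - 1/f_2(k+1) holds. -/
theorem stmt_2 (k : ℕ) (hk : 1 ≤ k)
    (f : ℚ → ℚ) (hf : ∀ x, f x = -2 * (2 * x - 1/2)^2 - 3/2) :
    1 / (f k + 1) - 1 / (f (k + 1) + 1) < -1 / (2 * k)^2 + 1 / (2 * k + 1)^2 ∧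
    -1 / ((2 : ℚ) * k)^2 + 1 / (2 * k + 1)^2 < 1 / f k - 1 / f (k + 1) := by
  have hq : (1 : ℚ) ≤ (k : ℚ) := by exact_mod_cast hk
  set q : ℚ := (k : ℚ) with hqdef
  rw [hf, hf]
  push_cast
  have h1 : -2 * (2 * q - 1/2)^2 - 3/2 + 1 < 0 := by nlinarith
  have h2 : -2 * (2 * (q+1) - 1/2)^2 - 3/2 + 1 < 0 := by nlinarith
  have h3 : -2 * (2 * q - 1/2)^2 - 3/2 < 0 := by nlinarith
  have h4 : -2 * (2 * (q+1) - 1/2)^2 - 3/2 < 0 := by nlinarith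
  have h5 : (0:ℚ) < (2*q)^2 := by positivity
  have h6 : (0:ℚ) < (2*q+1)^2 := by positivity
  constructor
  · rw [div_sub_div _ _ h1.ne h2.ne,
      div_add_div _ _ h5.ne' h6.ne',
      div_lt_div_iff₀ (mul_pos_of_neg_of_neg h1 h2) (mul_pos h5 h6)]
    nlinarith [sq_nonneg q, sq_nonneg (q-1), sq_nonneg (q*q), mul_pos (mul_pos h5 h6) (mul_pos_of_neg_of_neg h1 h2)]
  · rw [div_sub_div _ _ h3.ne h4.ne,
      div_add_div _ _ h5.ne' h6.ne',
      div_lt_div_iff₀ (mul_pos h5 h6) (mul_pos_of_neg_of_neg h3 h4)]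
    nlinarith [sq_nonneg q, sq_nonneg (q-1), sq_nonneg (q*q), mul_pos (mul_pos h5 h6) (mul_pos_of_neg_of_neg h3 h4)]
end

section
/- For every positive integer k, with g_2(k) = 2(2k-3/2)^2 + 1/2, the inequality 1/(g_2(k)+1) - 1/(g_2(k+1)+1) < 1/(2k-1)^2 - 1/(2k)^2 < 1/g_2(k) - 1/g_2(k+1) holds. -/
theorem stmt_3 (k : ℕ) (hk : 1 ≤ k)
    (g : ℚ → ℚ) (hg : ∀ x, g x = 2 * (2 * x - 3/2)^2 + 1/2) :
    1 / (g k + 1) - 1 / (g (k + 1) + 1) < 1 / (2 * k - 1)^2 - 1 / (2 * k)^2 ∧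
    1 / ((2 : ℚ) * k - 1)^2 - 1 / (2 * k)^2 < 1 / g k - 1 / g (k + 1) := by
  obtain ⟨n, rfl⟩ := Nat.exists_eq_add_of_le hk
  have hx : (1 : ℚ) ≤ (1 + n : ℕ) := by push_cast; linarith [Nat.cast_nonneg (α := ℚ) n]
  set x : ℚ := ((1 + n : ℕ) : ℚ) with hxdef
  rw [hg, hg]
  have h1 : (0:ℚ) < 2*x - 1 := by linarith
  have h2 : (0:ℚ) < 2*x := by linarith
  have h3 : (0:ℚ) < 2 * (2 * x - 3/2)^2 + 1/2 := by nlinarith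
  have h4 : (0:ℚ) < 2 * (2 * (x+1) - 3/2)^2 + 1/2 := by nlinarith
  constructor
  · rw [div_sub_div _ _ (by positivity) (by positivity), div_sub_div _ _ (by positivity) (by positivity),
      div_lt_div_iff₀ (by positivity) (by positivity)]
    nlinarith [sq_nonneg x, sq_nonneg (x-1), sq_nonneg (x*x), mul_pos h1 h2, sq_nonneg (x*(x-1))]
  · rw [div_sub_div _ _ (by positivity) (by positivity), div_sub_div _ _ (by positivity) (by positivity),
      div_lt_div_iff₀ (by positivity) (by positivity)]
    nlinarith [sq_nonneg x, sq_nonneg (x-1), sq_nonneg (x*x), mul_pos h1 h2, sq_nonneg (x*(x-1))]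
end

section
/- For every integer k ≥ 11, with f_3(k) = -16k^3 + 12k^2 - 9k + 1, the inequality 1/(f_3(k)+1) - 1/(f_3(k+1)+1) < -1/(2k)^3 + 1/(2k+1)^3 < 1/f_3(k) - 1/f_3(k+1) holds. -/
theorem stmt_4 (k : ℕ) (hk : 11 ≤ k)
    (f : ℚ → ℚ) (hf : ∀ x, f x = -16 * x^3 + 12 * x^2 - 9 * x + 1) :
    1 / (f k + 1) - 1 / (f (k + 1) + 1) < -1 / (2 * k)^3 + 1 / (2 * k + 1)^3 ∧
    -1 / ((2 : ℚ) * k)^3 + 1 / (2 * k + 1)^3 < 1 / f k - 1 / f (k + 1) := by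
  have hx : (11:ℚ) ≤ (k:ℚ) := by exact_mod_cast hk
  set x : ℚ := (k:ℚ) with hxdef
  have h1 : -16 * x ^ 3 + 12 * x ^ 2 - 9 * x + 1 + 1 < 0 := by nlinarith
  have h2 : -16 * (x+1) ^ 3 + 12 * (x+1) ^ 2 - 9 * (x+1) + 1 + 1 < 0 := by nlinarith
  have h3 : -16 * x ^ 3 + 12 * x ^ 2 - 9 * x + 1 < 0 := by nlinarith
  have h4 : -16 * (x+1) ^ 3 + 12 * (x+1) ^ 2 - 9 * (x+1) + 1 < 0 := by nlinarith
  have h5 : (0:ℚ) < (2*x)^3 := by positivity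
  have h6 : (0:ℚ) < (2*x+1)^3 := by positivity
  constructor
  · rw [hf, hf]

    rw [div_sub_div _ _ (ne_of_lt h1) (ne_of_lt h2), div_add_div _ _ (ne_of_gt h5) (ne_of_gt h6)]
    rw [div_lt_div_iff₀ (by nlinarith) (by positivity)]
    ring_nf
    nlinarith [sq_nonneg x, pow_pos (by linarith : (0:ℚ) < x) 3, pow_pos (by linarith : (0:ℚ) < x) 4, pow_pos (by linarith : (0:ℚ) < x) 5, pow_pos (by linarith : (0:ℚ) < x) 6]
  · rw [hf, hf]

    rw [div_sub_div _ _ (ne_of_lt h3) (ne_of_lt h4), div_add_div _ _ (ne_of_gt h5) (ne_of_gt h6)]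
    rw [div_lt_div_iff₀ (by positivity) (by nlinarith)]
    ring_nf
    nlinarith [sq_nonneg x, pow_pos (by linarith : (0:ℚ) < x) 3, pow_pos (by linarith : (0:ℚ) < x) 4, pow_pos (by linarith : (0:ℚ) < x) 5, pow_pos (by linarith : (0:ℚ) < x) 6]
end

section
/- For every integer k ≥ 4, with g_3(k) = 16k^3 - 36k^2 + 33k - 12, the inequality 1/(g_3(k)+1) - 1/(g_3(k+1)+1) < 1/(2k-1)^3 - 1/(2k)^3 < 1/g_3(k) - 1/g_3(k+1) holds. -/
theorem stmt_5 (k : ℕ) (hk : 4 ≤ k)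
    (g : ℚ → ℚ) (hg : ∀ x, g x = 16 * x^3 - 36 * x^2 + 33 * x - 12) :
    1 / (g k + 1) - 1 / (g (k + 1) + 1) < 1 / (2 * k - 1)^3 - 1 / (2 * k)^3 ∧
    1 / ((2 : ℚ) * k - 1)^3 - 1 / (2 * k)^3 < 1 / g k - 1 / g (k + 1) := by
  have hx : (4 : ℚ) ≤ (k : ℚ) := by exact_mod_cast hk
  set x : ℚ := (k : ℚ) with hxdef
  have hy : (0 : ℚ) ≤ x - 4 := by linarith
  have hy2 : (0 : ℚ) ≤ (x - 4)^2 := pow_nonneg hy 2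
  have hy3 : (0 : ℚ) ≤ (x - 4)^3 := pow_nonneg hy 3
  have hy4 : (0 : ℚ) ≤ (x - 4)^4 := pow_nonneg hy 4
  have hy5 : (0 : ℚ) ≤ (x - 4)^5 := pow_nonneg hy 5
  rw [hg, hg]
  push_cast
  have h1 : (0:ℚ) < 16 * x^3 - 36 * x^2 + 33 * x - 12 := by nlinarith
  have h2 : (0:ℚ) < 16 * (x+1)^3 - 36 * (x+1)^2 + 33 * (x+1) - 12 := by nlinarith
  have h3 : (0:ℚ) < 16 * x^3 - 36 * x^2 + 33 * x - 12 + 1 := by linarith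
  have h4 : (0:ℚ) < 16 * (x+1)^3 - 36 * (x+1)^2 + 33 * (x+1) - 12 + 1 := by linarith
  have h2x : (0:ℚ) < 2 * x - 1 := by linarith
  have h5 : (0:ℚ) < (2 * x - 1)^3 := pow_pos h2x 3
  have h6 : (0:ℚ) < (2 * x)^3 := by positivity
  constructor
  · rw [div_sub_div _ _ h3.ne' h4.ne', div_sub_div _ _ h5.ne' h6.ne',
      div_lt_div_iff₀ (mul_pos h3 h4) (mul_pos h5 h6)]
    nlinarith [hy, hy2, hy3, hy4, hy5]
  · rw [div_sub_div _ _ h5.ne' h6.ne', div_sub_div _ _ h1.ne' h2.ne',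
      div_lt_div_iff₀ (mul_pos h5 h6) (mul_pos h1 h2)]
    nlinarith [hy, hy2, hy3, hy4, hy5]
end

section
/- For every integer k ≥ 5, with f_4(k) = -32k^4 + 32k^3 - 32k^2 + 12k + 7, the inequality 1/(f_4(k)+1) - 1/(f_4(k+1)+1) < -1/(2k)^4 + 1/(2k+1)^4 < 1/f_4(k) - 1/f_4(k+1) holds. -/
/-!
Since `f_4(k) + 1 < 0` for `k ≥ 1`, all denominators have a known sign, and after clearing them
both inequalities become polynomial inequalities in `k` whose degree-11 leading terms cancel.
For the lower one the difference of the two sides is a quintic with positive coefficients. For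
the upper one it is a degree-7 polynomial with negative middle coefficients, which has positive
coefficients once written in `k - 5`.
-/

variable {K : Type*} [Field K] [LinearOrder K] [IsStrictOrderedRing K]

theorem one_div_sub_one_div_lt_one_div_sub_one_div_iff {a b c d : K} (hab : 0 < a * b)
    (hcd : 0 < c * d) :
    1 / a - 1 / b < 1 / c - 1 / d ↔ (b - a) * (c * d) < (d - c) * (a * b) := by
  have ha : a ≠ 0 := left_ne_zero_of_mul hab.ne'
  have hb : b ≠ 0 := right_ne_zero_of_mul hab.ne'
  have hc : c ≠ 0 := left_ne_zero_of_mul hcd.ne'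
  have hd : d ≠ 0 := right_ne_zero_of_mul hcd.ne'
  simp only [one_div, inv_sub_inv ha hb, inv_sub_inv hc hd]
  exact div_lt_div_iff₀ hab hcd

def quartic (x : K) : K := -32 * x ^ 4 + 32 * x ^ 3 - 32 * x ^ 2 + 12 * x + 7

theorem quartic_add_one_neg {x : K} (hx : 1 ≤ x) : quartic x + 1 < 0 := by
  have h0 : 0 ≤ x := by linarith
  have hcubic : 0 ≤ x ^ 3 * (x - 1) := mul_nonneg (pow_nonneg h0 3) (sub_nonneg.2 hx)
  have hsq : x ≤ x ^ 2 := by nlinarith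
  unfold quartic
  linarith

theorem quartic_neg {x : K} (hx : 1 ≤ x) : quartic x < 0 := by
  linarith [quartic_add_one_neg hx]

theorem one_div_quartic_add_one_sub_lt {x : K} (hx : 1 ≤ x) :
    1 / (quartic x + 1) - 1 / (quartic (x + 1) + 1) < 1 / (2 * x + 1) ^ 4 - 1 / (2 * x) ^ 4 := by
  have hx' : 1 ≤ x + 1 := by linarith
  rw [one_div_sub_one_div_lt_one_div_sub_one_div_iff
    (mul_pos_of_neg_of_neg (quartic_add_one_neg hx) (quartic_add_one_neg hx')) (by positivity)]
  have hdiff : ((2 * x) ^ 4 - (2 * x + 1) ^ 4) * ((quartic x + 1) * (quartic (x + 1) + 1)) -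
      (quartic (x + 1) + 1 - (quartic x + 1)) * ((2 * x + 1) ^ 4 * (2 * x) ^ 4) =
      96 + 1584 * x + 10480 * x ^ 2 + 35840 * x ^ 3 + 65600 * x ^ 4 + 52480 * x ^ 5 := by
    unfold quartic; ring
  have hx0 : 0 ≤ x := by linarith
  have hpos :
      0 < 96 + 1584 * x + 10480 * x ^ 2 + 35840 * x ^ 3 + 65600 * x ^ 4 + 52480 * x ^ 5 := by
    positivity
  linarith

theorem lt_one_div_quartic_sub {x : K} (hx : 5 ≤ x) :
    1 / (2 * x + 1) ^ 4 - 1 / (2 * x) ^ 4 < 1 / quartic x - 1 / quartic (x + 1) := by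
  have hx1 : (1 : K) ≤ x := by linarith
  have hx1' : (1 : K) ≤ x + 1 := by linarith
  rw [one_div_sub_one_div_lt_one_div_sub_one_div_iff (by positivity)
    (mul_pos_of_neg_of_neg (quartic_neg hx1) (quartic_neg hx1'))]
  obtain ⟨y, hy, rfl⟩ : ∃ y : K, 0 ≤ y ∧ x = y + 5 := ⟨x - 5, by linarith, by ring⟩
  have hdiff : (quartic (y + 5 + 1) - quartic (y + 5)) *
        ((2 * (y + 5) + 1) ^ 4 * (2 * (y + 5)) ^ 4) -
      ((2 * (y + 5)) ^ 4 - (2 * (y + 5) + 1) ^ 4) * (quartic (y + 5) * quartic (y + 5 + 1)) =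
      33275949 + 117616688 * y + 102029256 * y ^ 2 + 41221792 * y ^ 3 + 9112320 * y ^ 4 +
        1137408 * y ^ 5 + 75264 * y ^ 6 + 2048 * y ^ 7 := by
    unfold quartic; ring
  have hpos : 0 < 33275949 + 117616688 * y + 102029256 * y ^ 2 + 41221792 * y ^ 3 +
      9112320 * y ^ 4 + 1137408 * y ^ 5 + 75264 * y ^ 6 + 2048 * y ^ 7 := by
    positivity
  linarith

theorem stmt_6 (k : ℕ) (hk : 5 ≤ k)
    (f : ℚ → ℚ) (hf : ∀ x, f x = -32 * x^4 + 32 * x^3 - 32 * x^2 + 12 * x + 7) :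
    1 / (f k + 1) - 1 / (f (k + 1) + 1) < -1 / (2 * k)^4 + 1 / (2 * k + 1)^4 ∧
    -1 / ((2 : ℚ) * k)^4 + 1 / (2 * k + 1)^4 < 1 / f k - 1 / f (k + 1) := by
  obtain rfl : f = quartic := funext hf
  have hk' : (5 : ℚ) ≤ k := by exact_mod_cast hk
  have hmiddle : -1 / ((2 : ℚ) * k) ^ 4 + 1 / (2 * k + 1) ^ 4 =
      1 / (2 * (k : ℚ) + 1) ^ 4 - 1 / (2 * k) ^ 4 := by ring
  rw [hmiddle]
  exact ⟨one_div_quartic_add_one_sub_lt (by linarith), lt_one_div_quartic_sub hk'⟩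
end

section
/- For every integer k ≥ 6, with g_4(k) = 32k^4 - 96k^3 + 128k^2 - 84k + 12, the inequality 1/(g_4(k)+1) - 1/(g_4(k+1)+1) < 1/(2k-1)^4 - 1/(2k)^4 < 1/g_4(k) - 1/g_4(k+1) holds. -/
theorem stmt_7 (k : ℕ) (hk : 6 ≤ k)
    (g : ℚ → ℚ) (hg : ∀ x, g x = 32 * x^4 - 96 * x^3 + 128 * x^2 - 84 * x + 12) :
    1 / (g k + 1) - 1 / (g (k + 1) + 1) < 1 / (2 * k - 1)^4 - 1 / (2 * k)^4 ∧
    1 / ((2 : ℚ) * k - 1)^4 - 1 / (2 * k)^4 < 1 / g k - 1 / g (k + 1) := by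
  obtain ⟨m, rfl⟩ := Nat.exists_eq_add_of_le hk
  rw [hg, hg]
  have hx : (0 : ℚ) ≤ (m : ℚ) := by positivity
  push_cast
  set x : ℚ := (m : ℚ) with hxdef
  have ha : (0:ℚ) < 32 * (6 + x)^4 - 96 * (6 + x)^3 + 128 * (6 + x)^2 - 84 * (6 + x) + 12 + 1 := by nlinarith [pow_nonneg hx 2, pow_nonneg hx 3, pow_nonneg hx 4]
  have hb : (0:ℚ) < 32 * (6 + x + 1)^4 - 96 * (6 + x + 1)^3 + 128 * (6 + x + 1)^2 - 84 * (6 + x + 1) + 12 + 1 := by nlinarith [pow_nonneg hx 2, pow_nonneg hx 3, pow_nonneg hx 4]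
  have ha' : (0:ℚ) < 32 * (6 + x)^4 - 96 * (6 + x)^3 + 128 * (6 + x)^2 - 84 * (6 + x) + 12 := by nlinarith [pow_nonneg hx 2, pow_nonneg hx 3, pow_nonneg hx 4]
  have hb' : (0:ℚ) < 32 * (6 + x + 1)^4 - 96 * (6 + x + 1)^3 + 128 * (6 + x + 1)^2 - 84 * (6 + x + 1) + 12 := by nlinarith [pow_nonneg hx 2, pow_nonneg hx 3, pow_nonneg hx 4]
  have hc0 : (0:ℚ) < 2 * (6 + x) - 1 := by linarith
  have hc : (0:ℚ) < (2 * (6 + x) - 1)^4 := by positivity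
  have hd : (0:ℚ) < (2 * (6 + x))^4 := by positivity
  constructor
  · rw [div_sub_div _ _ ha.ne' hb.ne', div_sub_div _ _ hc.ne' hd.ne',
      div_lt_div_iff₀ (by positivity) (by positivity)]
    nlinarith [pow_nonneg hx 2, pow_nonneg hx 3, pow_nonneg hx 4, pow_nonneg hx 5, pow_nonneg hx 6, pow_nonneg hx 7]
  · rw [div_sub_div _ _ hc.ne' hd.ne', div_sub_div _ _ ha'.ne' hb'.ne',
      div_lt_div_iff₀ (by positivity) (by positivity)]
    nlinarith [pow_nonneg hx 2, pow_nonneg hx 3, pow_nonneg hx 4, pow_nonneg hx 5, pow_nonneg hx 6, pow_nonneg hx 7]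
end

section
/- For every positive even integer n, the tail ζ*_n(2) = Σ_{k=n}^∞ (-1)^{k+1}/k^2 satisfies -1/(2n^2-2n+1) < ζ*_n(2) < -1/(2n^2-2n+2). -/
open Filter Finset Topology

private lemma key_ub (m : ℝ) (hm : 1 ≤ m) :
    1/m^2 - 1/(m+1)^2 < 1/(2*m^2-2*m+1) - 1/(2*(m+2)^2-2*(m+2)+1) := by
  have h1 : 0 < m ^ 2 := by positivity
  have h2 : 0 < (m+1)^2 := by positivity
  have h3 : 0 < 2*m^2-2*m+1 := by nlinarith
  have h4 : 0 < 2*(m+2)^2-2*(m+2)+1 := by nlinarith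
  rw [div_sub_div _ _ (ne_of_gt h1) (ne_of_gt h2), div_sub_div _ _ (ne_of_gt h3) (ne_of_gt h4),
    div_lt_div_iff₀ (by positivity) (by positivity)]
  nlinarith [sq_nonneg m, sq_nonneg (m-1), sq_nonneg (m+1), sq_nonneg (m*m)]

private lemma key_lb (m : ℝ) (hm : 1 ≤ m) :
    1/(2*m^2-2*m+2) - 1/(2*(m+2)^2-2*(m+2)+2) < 1/m^2 - 1/(m+1)^2 := by
  have h1 : 0 < m ^ 2 := by positivity
  have h2 : 0 < (m+1)^2 := by positivity
  have h3 : 0 < 2*m^2-2*m+2 := by nlinarith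
  have h4 : 0 < 2*(m+2)^2-2*(m+2)+2 := by nlinarith
  rw [div_sub_div _ _ (ne_of_gt h1) (ne_of_gt h2), div_sub_div _ _ (ne_of_gt h3) (ne_of_gt h4),
    div_lt_div_iff₀ (by positivity) (by positivity)]
  nlinarith [sq_nonneg m, sq_nonneg (m-1), sq_nonneg (m+1), sq_nonneg (m*m)]

theorem stmt_11 (n : ℕ) (hn : 0 < n) (hev : Even n) :
    -1 / (2 * (n : ℝ)^2 - 2 * n + 1) < ∑' k : ℕ, (-1 : ℝ) ^ (n + k + 1) / (n + k) ^ 2 ∧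
    ∑' k : ℕ, (-1 : ℝ) ^ (n + k + 1) / (n + k) ^ 2 < -1 / (2 * n^2 - 2 * n + 2) := by
  have hn2 : 2 ≤ n := Nat.le_of_dvd hn hev.two_dvd
  set x : ℝ := (n : ℝ) with hxdef
  have hx : (2:ℝ) ≤ x := by rw [hxdef]; exact_mod_cast hn2
  -- the summand equals (-1)^(k+1)/(x+k)^2
  set f : ℕ → ℝ := fun k => (-1 : ℝ) ^ (k + 1) / (x + k) ^ 2 with hfdef
  have hfs : ∀ k : ℕ, (-1 : ℝ) ^ (n + k + 1) / ((n : ℝ) + k) ^ 2 = f k := by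
    intro k
    have : (-1 : ℝ) ^ (n + k + 1) = (-1 : ℝ) ^ (k + 1) := by
      rw [add_assoc, pow_add, hev.neg_one_pow, one_mul]
    rw [this]
  -- summability of f
  have hsum : Summable f := by
    have h0 : Summable (fun k : ℕ => 1 / ((k : ℝ)) ^ 2) :=
      Real.summable_one_div_nat_pow.mpr one_lt_two
    have h1 : Summable (fun k : ℕ => 1 / (((k + n : ℕ) : ℝ)) ^ 2) :=
      (summable_nat_add_iff (f := fun k : ℕ => 1 / ((k:ℝ)) ^ 2) n).mpr h0
    apply Summable.of_abs
    refine h1.congr (fun k => ?_)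
    have hx0 : (0:ℝ) < x + k := by positivity
    rw [hfdef]
    simp only [abs_div, abs_pow, abs_neg, abs_one, one_pow]
    rw [abs_of_pos hx0, hxdef]
    push_cast
    ring
  have hf2 : Summable (fun j : ℕ => f (2 * j)) :=
    hsum.comp_injective (fun a b h => by omega)
  have hf21 : Summable (fun j : ℕ => f (2 * j + 1)) :=
    hsum.comp_injective (fun a b h => by omega)
  -- paired series
  set b : ℕ → ℝ := fun j => 1 / (x + 2 * j) ^ 2 - 1 / (x + 2 * j + 1) ^ 2 with hbdef
  have hbf : ∀ j : ℕ, f (2 * j) + f (2 * j + 1) = -(b j) := by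
    intro j
    rw [hfdef, hbdef]
    have e1 : (-1 : ℝ) ^ (2 * j + 1) = -1 := by
      rw [pow_add, pow_mul]; norm_num
    have e2 : (-1 : ℝ) ^ (2 * j + 1 + 1) = 1 := by
      rw [pow_add, pow_add, pow_mul]; norm_num
    simp only [e1, e2]
    push_cast
    ring
  have hb : Summable b :=
    ((hf2.add hf21).neg).congr (fun j => by rw [hbf j, neg_neg])
  have hb' : Summable (fun j => b (j + 1)) :=
    (summable_nat_add_iff (f := b) 1).mpr hb
  -- the statement tsum equals -∑' b
  have hS : ∑' k : ℕ, (-1 : ℝ) ^ (n + k + 1) / ((n : ℝ) + k) ^ 2 = -(∑' j, b j) := by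
    rw [tsum_congr hfs, ← tsum_even_add_odd hf2 hf21, ← Summable.tsum_add hf2 hf21,
      tsum_congr hbf, tsum_neg]
  -- auxiliary telescoping functions
  set g : ℕ → ℝ := fun j => 1 / (2 * (x + 2 * j) ^ 2 - 2 * (x + 2 * j) + 1) with hgdef
  set h : ℕ → ℝ := fun j => 1 / (2 * (x + 2 * j) ^ 2 - 2 * (x + 2 * j) + 2) with hhdef
  have hm1 : ∀ j : ℕ, (1:ℝ) ≤ x + 2 * j := by
    intro j; have : (0:ℝ) ≤ (j:ℝ) := Nat.cast_nonneg j; linarith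
  have hgpos : ∀ j : ℕ, 0 < 2 * (x + 2 * j) ^ 2 - 2 * (x + 2 * j) + 1 := by
    intro j; have := hm1 j; nlinarith
  have hhpos : ∀ j : ℕ, 0 < 2 * (x + 2 * j) ^ 2 - 2 * (x + 2 * j) + 2 := by
    intro j; have := hm1 j; nlinarith
  have hgpos' : ∀ j : ℕ, 0 < g j := by
    intro j; rw [hgdef]; exact one_div_pos.mpr (hgpos j)
  have hhpos' : ∀ j : ℕ, 0 < h j := by
    intro j; rw [hhdef]; exact one_div_pos.mpr (hhpos j)
  have hgsucc : ∀ j : ℕ, b j < g j - g (j + 1) := by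
    intro j
    have := key_ub (x + 2 * j) (hm1 j)
    rw [hbdef, hgdef]
    simp only [Nat.cast_add, Nat.cast_one]
    convert this using 3 <;> ring
  have hhsucc : ∀ j : ℕ, h j - h (j + 1) < b j := by
    intro j
    have := key_lb (x + 2 * j) (hm1 j)
    rw [hbdef, hhdef]
    simp only [Nat.cast_add, Nat.cast_one]
    convert this using 3 <;> ring
  -- split off the first term
  have hsplit : ∑' j, b j = b 0 + ∑' j, b (j + 1) := Summable.tsum_eq_zero_add hb
  -- upper bound for the shifted tail
  have h_up : ∑' j, b (j + 1) ≤ g 1 := by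
    apply Summable.tsum_le_of_sum_range_le hb'
    intro N
    calc ∑ j ∈ range N, b (j + 1)
        ≤ ∑ j ∈ range N, (g (j + 1) - g (j + 2)) := by
          apply Finset.sum_le_sum
          intro j _
          exact (hgsucc (j + 1)).le
      _ = g 1 - g (N + 1) := by
          have := Finset.sum_range_sub' (fun j => g (j + 1)) N
          simpa using this
      _ ≤ g 1 := by linarith [hgpos' (N + 1)]
  -- lower bound for the shifted tail
  have h_tend0 : Tendsto (fun N : ℕ => h (N + 1)) atTop (𝓝 0) := by
    apply squeeze_zero (fun N => (hhpos' (N + 1)).le)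
      (g := fun N : ℕ => 1 / ((N : ℝ) + 1))
    · intro N
      rw [hhdef]
      apply one_div_le_one_div_of_le (by positivity)
      have h1 := hm1 (N + 1)
      have h2 : ((N:ℝ) + 1) ≤ x + 2 * ((N + 1 : ℕ) : ℝ) := by
        push_cast; linarith
      nlinarith
    · exact tendsto_one_div_add_atTop_nhds_zero_nat
  have h_lo : h 1 ≤ ∑' j, b (j + 1) := by
    have htend : Tendsto (fun N : ℕ => ∑ j ∈ range N, b (j + 1)) atTop
        (𝓝 (∑' j, b (j + 1))) := hb'.hasSum.tendsto_sum_nat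
    have htend2 : Tendsto (fun N : ℕ => h 1 - h (N + 1)) atTop (𝓝 (h 1)) := by
      simpa using (tendsto_const_nhds.sub h_tend0)
    refine le_of_tendsto_of_tendsto' htend2 htend (fun N => ?_)
    calc h 1 - h (N + 1)
        = ∑ j ∈ range N, (h (j + 1) - h (j + 2)) := by
          have := Finset.sum_range_sub' (fun j => h (j + 1)) N
          simp at this ⊢
          linarith [this]
      _ ≤ ∑ j ∈ range N, b (j + 1) := by
          apply Finset.sum_le_sum
          intro j _
          exact (hhsucc (j + 1)).le
  -- finish
  have hb0g : b 0 < g 0 - g 1 := hgsucc 0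
  have hb0h : h 0 - h 1 < b 0 := hhsucc 0
  have hsum_ub : ∑' j, b j < g 0 := by rw [hsplit]; linarith
  have hsum_lb : h 0 < ∑' j, b j := by rw [hsplit]; linarith
  have hg0 : g 0 = 1 / (2 * x ^ 2 - 2 * x + 1) := by rw [hgdef]; norm_num
  have hh0 : h 0 = 1 / (2 * x ^ 2 - 2 * x + 2) := by rw [hhdef]; norm_num
  rw [hg0] at hsum_ub
  rw [hh0] at hsum_lb
  constructor
  · rw [hS, neg_div, neg_lt_neg_iff]
    exact hsum_ub
  · rw [hS, neg_div, neg_lt_neg_iff]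
    exact hsum_lb
end

section
/- For every positive odd integer n, the tail ζ*_n(2) = Σ_{k=n}^∞ (-1)^{k+1}/k^2 satisfies 1/(2n^2-2n+2) < ζ*_n(2) < 1/(2n^2-2n+1). -/
open Filter Topology

private lemma telesum {c : ℕ → ℝ} (hmono : ∀ j, c (j + 1) ≤ c j)
    (h0 : Filter.Tendsto c Filter.atTop (nhds 0)) :
    HasSum (fun j => c j - c (j + 1)) (c 0) := by
  have hnn : ∀ j, 0 ≤ c j - c (j + 1) := fun j => sub_nonneg.2 (hmono j)
  rw [hasSum_iff_tendsto_nat_of_nonneg hnn]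
  have : ∀ N, ∑ i ∈ Finset.range N, (c i - c (i + 1)) = c 0 - c N := by
    intro N; exact Finset.sum_range_sub' c N
  simp only [this]
  simpa using (tendsto_const_nhds.sub h0)

private lemma key_upper {m : ℝ} (hm : 1 ≤ m) :
    1 / m ^ 2 - 1 / (m + 1) ^ 2 <
      1 / (2 * m ^ 2 - 2 * m + 1) - 1 / (2 * (m + 2) ^ 2 - 2 * (m + 2) + 1) := by
  have h1 : (0:ℝ) < m ^ 2 := by nlinarith
  have h2 : (0:ℝ) < (m + 1) ^ 2 := by nlinarith
  have h3 : (0:ℝ) < 2 * m ^ 2 - 2 * m + 1 := by nlinarith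
  have h4 : (0:ℝ) < 2 * (m + 2) ^ 2 - 2 * (m + 2) + 1 := by nlinarith
  rw [div_sub_div _ _ (ne_of_gt h1) (ne_of_gt h2), div_sub_div _ _ (ne_of_gt h3) (ne_of_gt h4),
    div_lt_div_iff₀ (by positivity) (by positivity)]
  nlinarith [sq_nonneg m, sq_nonneg (m - 1), sq_nonneg (m + 1), mul_pos h1 h2, mul_pos h3 h4]

private lemma key_lower {m : ℝ} (hm : 1 ≤ m) :
    1 / (2 * m ^ 2 - 2 * m + 2) - 1 / (2 * (m + 2) ^ 2 - 2 * (m + 2) + 2) <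
      1 / m ^ 2 - 1 / (m + 1) ^ 2 := by
  have h1 : (0:ℝ) < m ^ 2 := by nlinarith
  have h2 : (0:ℝ) < (m + 1) ^ 2 := by nlinarith
  have h3 : (0:ℝ) < 2 * m ^ 2 - 2 * m + 2 := by nlinarith
  have h4 : (0:ℝ) < 2 * (m + 2) ^ 2 - 2 * (m + 2) + 2 := by nlinarith
  rw [div_sub_div _ _ (ne_of_gt h3) (ne_of_gt h4), div_sub_div _ _ (ne_of_gt h1) (ne_of_gt h2),
    div_lt_div_iff₀ (by positivity) (by positivity)]
  nlinarith [sq_nonneg m, sq_nonneg (m - 1), mul_pos h1 h2, mul_pos h3 h4]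

theorem stmt_12 (n : ℕ) (hn : 0 < n) (hodd : Odd n) :
    1 / (2 * (n : ℝ)^2 - 2 * n + 2) < ∑' k : ℕ, (-1 : ℝ) ^ (n + k + 1) / (n + k) ^ 2 ∧
    ∑' k : ℕ, (-1 : ℝ) ^ (n + k + 1) / (n + k) ^ 2 < 1 / (2 * n^2 - 2 * n + 1) := by
  have hn1 : (1:ℝ) ≤ (n:ℝ) := by exact_mod_cast hn
  set a : ℕ → ℝ := fun k => (-1 : ℝ) ^ (n + k + 1) / (n + k) ^ 2 with ha
  -- summability of a
  have hpos : ∀ k : ℕ, (0:ℝ) < ((n:ℝ) + k) ^ 2 := by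
    intro k; have : (0:ℝ) < (n:ℝ) + k := by positivity
    positivity
  have hsum_a : Summable a := by
    have h1 : Summable (fun k : ℕ => 1 / ((n:ℝ) + k) ^ 2) := by
      have := (Real.summable_one_div_nat_pow (p := 2)).2 (by norm_num)
      have h2 := (summable_nat_add_iff (f := fun k : ℕ => 1 / (k:ℝ) ^ 2) n).2 this
      refine h2.congr fun k => ?_
      push_cast
      rw [add_comm]
    have h3 : Summable (fun k : ℕ => |a k|) := by
      refine h1.congr fun k => ?_
      rw [ha]
      rw [abs_div, abs_pow, abs_neg, abs_one, one_pow]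
      rw [abs_of_pos (hpos k)]
    exact h3.of_abs
  -- sign computation
  have hsign_even : ∀ j : ℕ, (-1 : ℝ) ^ (n + 2 * j + 1) = 1 := by
    intro j
    refine Even.neg_one_pow ?_
    rcases hodd with ⟨t, ht⟩
    exact ⟨t + j + 1, by omega⟩
  have hsign_odd : ∀ j : ℕ, (-1 : ℝ) ^ (n + (2 * j + 1) + 1) = -1 := by
    intro j
    refine Odd.neg_one_pow ?_
    rcases hodd with ⟨t, ht⟩
    exact ⟨t + j + 1, by omega⟩
  -- pair sums
  set b : ℕ → ℝ := fun j => a (2 * j) + a (2 * j + 1) with hb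
  have hb_eq : ∀ j : ℕ, b j = 1 / ((n:ℝ) + 2 * j) ^ 2 - 1 / ((n:ℝ) + 2 * j + 1) ^ 2 := by
    intro j
    simp only [hb, ha]
    rw [hsign_even j, hsign_odd j]
    push_cast
    ring
  have hsum_even : Summable fun j => a (2 * j) :=
    hsum_a.comp_injective (fun x y h => by omega)
  have hsum_odd : Summable fun j => a (2 * j + 1) :=
    hsum_a.comp_injective (fun x y h => by omega)
  have hsum_b : Summable b := hsum_even.add hsum_odd
  have htsum_eq : ∑' j, b j = ∑' k, a k := by
    rw [hb]
    rw [Summable.tsum_add hsum_even hsum_odd]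
    exact tsum_even_add_odd hsum_even hsum_odd
  -- m j := n + 2j as real, with 1 ≤ m j
  have hm : ∀ j : ℕ, (1:ℝ) ≤ (n:ℝ) + 2 * j := by
    intro j; have : (0:ℝ) ≤ (j:ℝ) := j.cast_nonneg; linarith
  -- upper bound telescoping sequence
  set c : ℕ → ℝ := fun j => 1 / (2 * ((n:ℝ) + 2 * j) ^ 2 - 2 * ((n:ℝ) + 2 * j) + 1) with hc
  set e : ℕ → ℝ := fun j => 1 / (2 * ((n:ℝ) + 2 * j) ^ 2 - 2 * ((n:ℝ) + 2 * j) + 2) with he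
  have hden_c : ∀ j : ℕ, (0:ℝ) < 2 * ((n:ℝ) + 2 * j) ^ 2 - 2 * ((n:ℝ) + 2 * j) + 1 := by
    intro j; nlinarith [hm j]
  have hden_e : ∀ j : ℕ, (0:ℝ) < 2 * ((n:ℝ) + 2 * j) ^ 2 - 2 * ((n:ℝ) + 2 * j) + 2 := by
    intro j; nlinarith [hm j]
  have hc_succ : ∀ j : ℕ, c (j + 1) =
      1 / (2 * (((n:ℝ) + 2 * j) + 2) ^ 2 - 2 * (((n:ℝ) + 2 * j) + 2) + 1) := by
    intro j; simp only [hc]; push_cast; ring_nf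
  have he_succ : ∀ j : ℕ, e (j + 1) =
      1 / (2 * (((n:ℝ) + 2 * j) + 2) ^ 2 - 2 * (((n:ℝ) + 2 * j) + 2) + 2) := by
    intro j; simp only [he]; push_cast; ring_nf
  -- monotonicity and limits
  have hc_mono : ∀ j, c (j + 1) ≤ c j := by
    intro j
    rw [hc_succ j]
    apply div_le_div_of_nonneg_left (by norm_num) (hden_c j)
    nlinarith [hm j]
  have he_mono : ∀ j, e (j + 1) ≤ e j := by
    intro j
    rw [he_succ j]
    apply div_le_div_of_nonneg_left (by norm_num) (hden_e j)
    nlinarith [hm j]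
  have hc0 : Filter.Tendsto c Filter.atTop (nhds 0) := by
    apply squeeze_zero (fun j => le_of_lt (div_pos one_pos (hden_c j))) (g := fun j : ℕ => 1 / ((j:ℝ) + 1))
    · intro j
      apply div_le_div_of_nonneg_left (by norm_num) (by positivity)
      nlinarith [hm j, (Nat.cast_nonneg j : (0:ℝ) ≤ j), hn1]
    · exact tendsto_one_div_add_atTop_nhds_zero_nat
  have he0 : Filter.Tendsto e Filter.atTop (nhds 0) := by
    apply squeeze_zero (fun j => le_of_lt (div_pos one_pos (hden_e j))) (g := fun j : ℕ => 1 / ((j:ℝ) + 1))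
    · intro j
      apply div_le_div_of_nonneg_left (by norm_num) (by positivity)
      nlinarith [hm j, (Nat.cast_nonneg j : (0:ℝ) ≤ j), hn1]
    · exact tendsto_one_div_add_atTop_nhds_zero_nat
  have hc_tele : HasSum (fun j => c j - c (j + 1)) (c 0) := telesum hc_mono hc0
  have he_tele : HasSum (fun j => e j - e (j + 1)) (e 0) := telesum he_mono he0
  -- pointwise strict bounds
  have hb_lt : ∀ j, b j < c j - c (j + 1) := by
    intro j
    rw [hb_eq j, hc_succ j]
    have := key_upper (hm j)
    simpa [hc] using this
  have hb_gt : ∀ j, e j - e (j + 1) < b j := by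
    intro j
    rw [hb_eq j, he_succ j]
    have := key_lower (hm j)
    simpa [he] using this
  have hb_nonneg : ∀ j, 0 ≤ b j := by
    intro j
    have := hb_gt j
    have h2 : 0 ≤ e j - e (j + 1) := sub_nonneg.2 (he_mono j)
    linarith
  have he_nonneg : ∀ j, 0 ≤ e j - e (j + 1) := fun j => sub_nonneg.2 (he_mono j)
  -- conclude
  have hupper : ∑' j, b j < c 0 := by
    rw [← hc_tele.tsum_eq]
    exact Summable.tsum_lt_tsum_of_nonneg (i := 0) hb_nonneg (fun j => le_of_lt (hb_lt j)) (hb_lt 0)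
      ⟨c 0, hc_tele⟩
  have hlower : e 0 < ∑' j, b j := by
    rw [← he_tele.tsum_eq]
    exact Summable.tsum_lt_tsum_of_nonneg (i := 0) he_nonneg (fun j => le_of_lt (hb_gt j)) (hb_gt 0) hsum_b
  have hc0v : c 0 = 1 / (2 * (n:ℝ)^2 - 2 * n + 1) := by simp [hc]
  have he0v : e 0 = 1 / (2 * (n:ℝ)^2 - 2 * n + 2) := by simp [he]
  rw [← htsum_eq]
  exact ⟨he0v ▸ hlower, hc0v ▸ hupper⟩
end

section
/- For every even integer n ≥ 22, the tail ζ*_n(3) = Σ_{k=n}^∞ (-1)^{k+1}/k^3 satisfies -1/(2n^3-3n^2+(9/2)n-2) < ζ*_n(3) < -1/(2n^3-3n^2+(9/2)n-1), and consequently ⌊ζ*_n(3)^{-1}⌋ = -(2n^3-3n^2+(9/2)n-1). -/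
set_option maxHeartbeats 1000000

open Finset Filter

noncomputable def Qaux (c x : ℝ) : ℝ := 2*x^3 - 3*x^2 + 9/2*x - c

lemma Qaux_ge_self {c x : ℝ} (hc : c ≤ 2) (hx : 22 ≤ x) : x ≤ Qaux c x := by
  unfold Qaux; nlinarith [sq_nonneg (x - 22)]

lemma Qaux_pos {c x : ℝ} (hc : c ≤ 2) (hx : 22 ≤ x) : 0 < Qaux c x :=
  lt_of_lt_of_le (by linarith) (Qaux_ge_self hc hx)

lemma aux_upper {x : ℝ} (hx : 22 ≤ x) :
    1/x^3 - 1/(x+1)^3 < 1/Qaux 2 x - 1/Qaux 2 (x+2) := by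
  have h0 : (0:ℝ) < x := by linarith
  have h1 : (0:ℝ) < x + 1 := by linarith
  have hp1 : 0 < Qaux 2 x := Qaux_pos le_rfl hx
  have hp2 : 0 < Qaux 2 (x+2) := Qaux_pos le_rfl (by linarith)
  have e1 : 1/x^3 - 1/(x+1)^3 = (3*x^2+3*x+1)/(x^3*(x+1)^3) := by
    field_simp; ring
  have e2 : 1/Qaux 2 x - 1/Qaux 2 (x+2) = (12*x^2+12*x+13)/(Qaux 2 x * Qaux 2 (x+2)) := by
    rw [div_sub_div _ _ hp1.ne' hp2.ne']
    congr 1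
    unfold Qaux; ring
  rw [e1, e2, div_lt_div_iff₀ (by positivity) (mul_pos hp1 hp2)]
  unfold Qaux
  have ht : (0:ℝ) ≤ x - 22 := by linarith
  nlinarith [ht, mul_nonneg ht ht, mul_nonneg (mul_nonneg ht ht) ht,
    mul_nonneg (mul_nonneg (mul_nonneg ht ht) ht) ht,
    mul_nonneg (mul_nonneg (mul_nonneg (mul_nonneg ht ht) ht) ht) ht]

lemma aux_lower {x : ℝ} (hx : 22 ≤ x) :
    1/Qaux 1 x - 1/Qaux 1 (x+2) < 1/x^3 - 1/(x+1)^3 := by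
  have h0 : (0:ℝ) < x := by linarith
  have h1 : (0:ℝ) < x + 1 := by linarith
  have hp1 : 0 < Qaux 1 x := Qaux_pos (by norm_num) hx
  have hp2 : 0 < Qaux 1 (x+2) := Qaux_pos (by norm_num) (by linarith)
  have e1 : 1/x^3 - 1/(x+1)^3 = (3*x^2+3*x+1)/(x^3*(x+1)^3) := by
    field_simp; ring
  have e2 : 1/Qaux 1 x - 1/Qaux 1 (x+2) = (12*x^2+12*x+13)/(Qaux 1 x * Qaux 1 (x+2)) := by
    rw [div_sub_div _ _ hp1.ne' hp2.ne']
    congr 1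
    unfold Qaux; ring
  rw [e1, e2, div_lt_div_iff₀ (mul_pos hp1 hp2) (by positivity)]
  unfold Qaux
  have ht : (0:ℝ) ≤ x - 22 := by linarith
  nlinarith [ht, mul_nonneg ht ht, mul_nonneg (mul_nonneg ht ht) ht,
    mul_nonneg (mul_nonneg (mul_nonneg ht ht) ht) ht,
    mul_nonneg (mul_nonneg (mul_nonneg (mul_nonneg ht ht) ht) ht) ht]

lemma tele_upper {N : ℝ} (hN : 22 ≤ N) (M : ℕ) :
    ∑ m ∈ Finset.range M, (1/(N+2*(m:ℝ))^3 - 1/(N+2*(m:ℝ)+1)^3)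
      ≤ 1/Qaux 2 N - 1/Qaux 2 (N+2*(M:ℝ)) := by
  induction M with
  | zero => simp
  | succ M ih =>
    rw [Finset.sum_range_succ]
    have hm : (0:ℝ) ≤ (M:ℝ) := Nat.cast_nonneg M
    have hxM : 22 ≤ N + 2*(M:ℝ) := by linarith
    have h := aux_upper hxM
    have e : N + 2*((M:ℕ)+1:ℝ) = (N + 2*(M:ℝ)) + 2 := by ring
    push_cast
    rw [e]
    push_cast at ih
    linarith

lemma tele_lower {N : ℝ} (hN : 22 ≤ N) (M : ℕ) :
    1/Qaux 1 N - 1/Qaux 1 (N+2*(M:ℝ))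
      ≤ ∑ m ∈ Finset.range M, (1/(N+2*(m:ℝ))^3 - 1/(N+2*(m:ℝ)+1)^3) := by
  induction M with
  | zero => simp
  | succ M ih =>
    rw [Finset.sum_range_succ]
    have hm : (0:ℝ) ≤ (M:ℝ) := Nat.cast_nonneg M
    have hxM : 22 ≤ N + 2*(M:ℝ) := by linarith
    have h := aux_lower hxM
    have e : N + 2*((M:ℕ)+1:ℝ) = (N + 2*(M:ℝ)) + 2 := by ring
    push_cast
    rw [e]
    push_cast at ih
    linarith

theorem stmt_14 (n : ℕ) (hn : 22 ≤ n) (hev : Even n) :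
    (-1 / (2 * (n : ℝ)^3 - 3 * n^2 + (9/2) * n - 2) <
        ∑' k : ℕ, (-1 : ℝ) ^ (n + k + 1) / (n + k) ^ 3 ∧
      ∑' k : ℕ, (-1 : ℝ) ^ (n + k + 1) / (n + k) ^ 3 <
        -1 / (2 * n^3 - 3 * n^2 + (9/2) * n - 1)) ∧
    (⌊(∑' k : ℕ, (-1 : ℝ) ^ (n + k + 1) / (n + k) ^ 3)⁻¹⌋ : ℝ) =
      -(2 * n^3 - 3 * n^2 + (9/2) * n - 1) := by
  have hN : (22:ℝ) ≤ (n:ℝ) := by exact_mod_cast hn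
  set N : ℝ := (n:ℝ) with hNdef
  set b : ℕ → ℝ := fun m => 1/(N+2*(m:ℝ))^3 - 1/(N+2*(m:ℝ)+1)^3 with hbdef
  have hb_nonneg : ∀ m, 0 ≤ b m := by
    intro m
    have hm : (0:ℝ) ≤ (m:ℝ) := Nat.cast_nonneg m
    have : 1/(N+2*(m:ℝ)+1)^3 ≤ 1/(N+2*(m:ℝ))^3 := by
      apply one_div_le_one_div_of_le (by positivity)
      nlinarith
    simpa [hbdef] using sub_nonneg.mpr this
  have hQpos : ∀ (c : ℝ), c ≤ 2 → ∀ M : ℕ, 0 < Qaux c (N+2*(M:ℝ)) := by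
    intro c hc M
    have hm : (0:ℝ) ≤ (M:ℝ) := Nat.cast_nonneg M
    exact Qaux_pos hc (by linarith)
  -- summability of b
  have hsumb : Summable b := by
    apply summable_of_sum_range_le hb_nonneg (c := 1/Qaux 2 N)
    intro M
    have := tele_upper hN M
    have h2 := (hQpos 2 le_rfl M)
    have : ∑ m ∈ Finset.range M, b m ≤ 1/Qaux 2 N - 1/Qaux 2 (N+2*(M:ℝ)) := this
    have h3 : (0:ℝ) ≤ 1/Qaux 2 (N+2*(M:ℝ)) := le_of_lt (by positivity)
    linarith
  have hsumtail : Summable (fun m => b (m+1)) := (summable_nat_add_iff 1).mpr hsumb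
  -- tail sums rewritten at base N+2
  have htail_eq : ∀ M : ℕ, ∑ m ∈ Finset.range M, b (m+1)
      = ∑ m ∈ Finset.range M, (1/((N+2)+2*(m:ℝ))^3 - 1/((N+2)+2*(m:ℝ)+1)^3) := by
    intro M
    apply Finset.sum_congr rfl
    intro m _
    simp only [hbdef]
    push_cast
    ring_nf
  have hN2 : (22:ℝ) ≤ N + 2 := by linarith
  -- upper bound on tail
  have htail_ub : ∑' m, b (m+1) ≤ 1/Qaux 2 (N+2) := by
    apply Summable.tsum_le_of_sum_range_le hsumtail
    intro M
    rw [htail_eq M]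
    have h1 := tele_upper hN2 M
    have hm : (0:ℝ) ≤ (M:ℝ) := Nat.cast_nonneg M
    have h3 : (0:ℝ) < Qaux 2 ((N+2)+2*(M:ℝ)) := Qaux_pos le_rfl (by linarith)
    have h4 : (0:ℝ) ≤ 1/Qaux 2 ((N+2)+2*(M:ℝ)) := le_of_lt (by positivity)
    linarith
  -- lower bound on tail via limits
  have htends0 : Tendsto (fun M : ℕ => 1/Qaux 1 ((N+2)+2*(M:ℝ))) atTop (nhds 0) := by
    apply squeeze_zero (g := fun M : ℕ => 1/((M:ℝ)+1))
    · intro M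
      have hm : (0:ℝ) ≤ (M:ℝ) := Nat.cast_nonneg M
      have := Qaux_pos (le_of_lt one_lt_two) (show (22:ℝ) ≤ (N+2)+2*(M:ℝ) by linarith)
      positivity
    · intro M
      have hm : (0:ℝ) ≤ (M:ℝ) := Nat.cast_nonneg M
      have hx : (22:ℝ) ≤ (N+2)+2*(M:ℝ) := by linarith
      have h1 := Qaux_ge_self (le_of_lt one_lt_two) hx
      apply one_div_le_one_div_of_le (by positivity)
      linarith
    · exact tendsto_one_div_add_atTop_nhds_zero_nat
  have htail_lb : 1/Qaux 1 (N+2) ≤ ∑' m, b (m+1) := by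
    have hps := hsumtail.hasSum.tendsto_sum_nat
    have hlow : Tendsto (fun M : ℕ => 1/Qaux 1 (N+2) - 1/Qaux 1 ((N+2)+2*(M:ℝ)))
        atTop (nhds (1/Qaux 1 (N+2))) := by
      have := (tendsto_const_nhds (x := 1/Qaux 1 (N+2)) (f := atTop (α := ℕ))).sub htends0
      simpa using this
    refine le_of_tendsto_of_tendsto' hlow hps ?_
    intro M
    rw [htail_eq M]
    exact tele_lower hN2 M
  -- value of T
  have hTsplit : ∑' m, b m = b 0 + ∑' m, b (m+1) := Summable.tsum_eq_zero_add hsumb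
  have hb0 : b 0 = 1/N^3 - 1/(N+1)^3 := by simp [hbdef]
  have hkeyU := aux_upper hN
  have hkeyL := aux_lower hN
  have hTub : ∑' m, b m < 1/Qaux 2 N := by
    rw [hTsplit, hb0]
    have : 1/Qaux 2 (N+2) = 1/Qaux 2 (N+2*((1:ℕ):ℝ)) := by norm_num
    linarith
  have hTlb : 1/Qaux 1 N < ∑' m, b m := by
    rw [hTsplit, hb0]
    linarith
  -- identify the alternating series with -T
  have hu : Summable (fun m : ℕ => 1/(N+2*(m:ℝ))^3) := by
    apply Summable.of_nonneg_of_le (fun m => by positivity)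
      (f := fun m : ℕ => 1/((m:ℝ)+1)^2)
    · intro m
      have hm : (0:ℝ) ≤ (m:ℝ) := Nat.cast_nonneg m
      apply one_div_le_one_div_of_le (by positivity)
      have h2 : (m:ℝ)+1 ≤ N+2*m := by linarith
      have h3 : ((m:ℝ)+1)^2 ≤ (N+2*m)^2 := by nlinarith
      have h4 : (N+2*m)^2 ≤ (N+2*m)^3 := by nlinarith
      linarith
    · have h1 : Summable (fun m : ℕ => 1/(m:ℝ)^2) :=
        Real.summable_one_div_nat_pow.mpr one_lt_two
      have h2 := (summable_nat_add_iff 1).mpr h1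
      refine h2.congr fun m => ?_
      push_cast
      ring
  have hv : Summable (fun m : ℕ => 1/(N+2*(m:ℝ)+1)^3) := by
    apply Summable.of_nonneg_of_le (fun m => by positivity)
      (f := fun m : ℕ => 1/((m:ℝ)+1)^2)
    · intro m
      have hm : (0:ℝ) ≤ (m:ℝ) := Nat.cast_nonneg m
      apply one_div_le_one_div_of_le (by positivity)
      have h2 : (m:ℝ)+1 ≤ N+2*m := by linarith
      have h3 : ((m:ℝ)+1)^2 ≤ (N+2*m)^2 := by nlinarith
      have h0 : (0:ℝ) ≤ N+2*m := by linarith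
      have h4 : (N+2*m)^2 ≤ (N+2*m+1)^3 := by nlinarith [mul_nonneg (mul_nonneg h0 h0) h0, sq_nonneg (N+2*m)]
      linarith
    · have h1 : Summable (fun m : ℕ => 1/(m:ℝ)^2) :=
        Real.summable_one_div_nat_pow.mpr one_lt_two
      have h2 := (summable_nat_add_iff 1).mpr h1
      refine h2.congr fun m => ?_
      push_cast
      ring
  set F : ℕ → ℝ := fun k => (-1 : ℝ) ^ (n + k + 1) / (N + (k:ℝ)) ^ 3 with hFdef
  have hFeven : ∀ m : ℕ, F (2*m) = -(1/(N+2*(m:ℝ))^3) := by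
    intro m
    have hodd : Odd (n + 2*m + 1) := (hev.add (even_two_mul m)).add_one
    simp only [hFdef]
    rw [hodd.neg_one_pow]
    push_cast
    ring
  have hFodd : ∀ m : ℕ, F (2*m+1) = 1/(N+2*(m:ℝ)+1)^3 := by
    intro m
    have heven : Even (n + (2*m+1) + 1) := by
      have : n + (2*m+1) + 1 = (n + 2*m) + 2 := by ring
      rw [this]
      exact (hev.add (even_two_mul m)).add even_two
    simp only [hFdef]
    rw [heven.neg_one_pow]
    push_cast
    ring
  have hse : Summable (fun m => F (2*m)) := by
    refine (hu.neg).congr fun m => ?_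
    rw [hFeven m]
  have hso : Summable (fun m => F (2*m+1)) := by
    refine hv.congr fun m => ?_
    rw [hFodd m]
  have hsplit := tsum_even_add_odd hse hso
  have hSe : ∑' m, F (2*m) = -(∑' m : ℕ, (1/(N+2*(m:ℝ))^3)) := by
    rw [← tsum_neg]
    exact tsum_congr hFeven
  have hSo : ∑' m, F (2*m+1) = ∑' m : ℕ, (1/(N+2*(m:ℝ)+1)^3) := tsum_congr hFodd
  have hbsub : ∑' m, b m = (∑' m : ℕ, (1/(N+2*(m:ℝ))^3)) - ∑' m : ℕ, (1/(N+2*(m:ℝ)+1)^3) := by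
    rw [← Summable.tsum_sub hu hv]
  have hST : ∑' k, F k = -(∑' m, b m) := by
    rw [← hsplit, hSe, hSo, hbsub]
    ring
  -- the three claims
  have hD1 : Qaux 1 N = 2 * N^3 - 3 * N^2 + (9/2) * N - 1 := by unfold Qaux; ring
  have hD2 : Qaux 2 N = 2 * N^3 - 3 * N^2 + (9/2) * N - 2 := by unfold Qaux; ring
  have hp1 : 0 < Qaux 1 N := Qaux_pos (by norm_num) hN
  have hp2 : 0 < Qaux 2 N := Qaux_pos le_rfl hN
  have hTpos : 0 < ∑' m, b m := lt_trans (by positivity) hTlb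
  have hgoal1 : -1 / (2 * N^3 - 3 * N^2 + (9/2) * N - 2) < ∑' k, F k := by
    rw [← hD2, hST, neg_div]
    rw [neg_lt_neg_iff]
    exact hTub
  have hgoal2 : ∑' k, F k < -1 / (2 * N^3 - 3 * N^2 + (9/2) * N - 1) := by
    rw [← hD1, hST, neg_div, neg_lt_neg_iff]
    exact hTlb
  refine ⟨⟨hgoal1, hgoal2⟩, ?_⟩
  -- floor statement
  obtain ⟨t, ht⟩ := hev
  have hinv : (∑' k, F k)⁻¹ = -(1/(∑' m, b m)) := by
    rw [hST, inv_neg, one_div]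
  have hA : 1/(∑' m, b m) < Qaux 1 N := by
    rw [div_lt_iff₀ hTpos]
    rw [div_lt_iff₀ hp1] at hTlb
    linarith [hTlb]
  have hB : Qaux 2 N < 1/(∑' m, b m) := by
    rw [lt_div_iff₀ hTpos]
    rw [lt_div_iff₀ hp2] at hTub
    linarith [hTub]
  have hz : (((-(2*(n:ℤ)^3 - 3*(n:ℤ)^2 + 9*(t:ℤ) - 1)) : ℤ) : ℝ)
      = -(2 * N^3 - 3 * N^2 + (9/2) * N - 1) := by
    simp only [hNdef]
    subst ht
    push_cast
    ring
  have hfloor : ⌊(∑' k, F k)⁻¹⌋ = -(2*(n:ℤ)^3 - 3*(n:ℤ)^2 + 9*(t:ℤ) - 1) := by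
    rw [Int.floor_eq_iff]
    constructor
    · rw [hz, hinv, ← hD1]
      linarith
    · rw [hinv]
      have : ((-(2*(n:ℤ)^3 - 3*(n:ℤ)^2 + 9*(t:ℤ) - 1) : ℤ) : ℝ) + 1
          = -(Qaux 2 N) := by
        rw [hz, hD2]; ring
      rw [this]
      linarith
  rw [hfloor, hz]
end

section
/- For every odd integer n ≥ 7, the tail ζ*_n(3) = Σ_{k=n}^∞ (-1)^{k+1}/k^3 satisfies 1/(2n^3-3n^2+(9/2)n-3/2) < ζ*_n(3) < 1/(2n^3-3n^2+(9/2)n-5/2), and consequently ⌊ζ*_n(3)^{-1}⌋ = 2n^3-3n^2+(9/2)n-5/2. -/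
/-!
For odd `n` the terms of the tail pair up into `g (n + 2j)` with `g x = 1/x^3 - 1/(x+1)^3`.
Writing `D_c x = 2x^3 - 3x^2 + 9x/2 - c`, the series `∑ j, (1/D_c (n+2j) - 1/D_c (n+2j+2))`
telescopes to `1/D_c n`, and clearing denominators shows that its terms lie strictly below `g`
for `c = 3/2` and strictly above `g` for `c = 5/2` (the latter once `x ≥ 7`). Comparing the
series termwise gives the two bounds, and since `D_{3/2} n = D_{5/2} n + 1` is an integer for odd
`n`, they pin down the floor of the reciprocal.
-/

open Filter Topology

lemma hasSum_sub_succ_of_antitone {F : ℕ → ℝ} {l : ℝ} (hF : Antitone F)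
    (hl : Tendsto F atTop (𝓝 l)) : HasSum (fun j => F j - F (j + 1)) (F 0 - l) :=
  (hasSum_iff_tendsto_nat_of_nonneg (fun j => sub_nonneg.2 (hF j.le_succ)) _).2 <| by
    simpa only [Finset.sum_range_sub'] using tendsto_const_nhds.sub hl

lemma Summable.hasSum_add_pairs {α : Type*} [AddCommGroup α] [UniformSpace α]
    [IsUniformAddGroup α] [CompleteSpace α] [T2Space α] {f : ℕ → α} (hf : Summable f) :
    HasSum (fun j => f (2 * j) + f (2 * j + 1)) (∑' k, f k) := by
  have he : Summable fun j => f (2 * j) := hf.comp_injective fun a b h => by omega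
  have ho : Summable fun j => f (2 * j + 1) := hf.comp_injective fun a b h => by omega
  rw [← tsum_even_add_odd he ho]
  exact he.hasSum.add ho.hasSum

lemma Int.floor_inv_eq_of_lt_of_lt {K : Type*} [Field K] [LinearOrder K] [IsStrictOrderedRing K]
    [FloorRing K] {S : K} {m : ℤ} (hm : 0 < m) (hlo : 1 / ((m : K) + 1) < S) (hhi : S < 1 / m) :
    ⌊S⁻¹⌋ = m := by
  have hm' : (0 : K) < m := by exact_mod_cast hm
  have hS : 0 < S := lt_trans (by positivity) hlo
  rw [one_div, lt_inv_comm₀ hS hm'] at hhi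
  rw [one_div, inv_lt_comm₀ (by positivity) hS] at hlo
  exact Int.floor_eq_iff.2 ⟨hhi.le, hlo⟩

noncomputable section

namespace ZetaTail

def den (c x : ℝ) : ℝ := 2 * x ^ 3 - 3 * x ^ 2 + (9 / 2) * x - c

def approx (c x : ℝ) : ℝ := 1 / den c x

lemma den_mono (c : ℝ) : Monotone (den c) := by
  intro x y hxy
  have hyx : 0 ≤ y - x := sub_nonneg.2 hxy
  unfold den
  -- `den c y - den c x = (y - x) * (3/2 (x + y - 1)^2 + 1/2 (x - y)^2 + 3)`
  nlinarith [mul_nonneg hyx (sq_nonneg (x + y - 1)), mul_nonneg hyx (sq_nonneg (x - y))]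

lemma den_pos {c x : ℝ} (hc : c ≤ 3) (hx : 1 ≤ x) : 0 < den c x := by
  have := den_mono c hx
  simp only [den] at this ⊢
  linarith

lemma approx_antitoneOn {c : ℝ} (hc : c ≤ 3) : AntitoneOn (approx c) (Set.Ici 1) :=
  fun _ hx _ _ hxy => one_div_le_one_div_of_le (den_pos hc hx) (den_mono c hxy)

lemma tendsto_den_atTop (c : ℝ) : Tendsto (den c) atTop atTop := by
  refine tendsto_atTop_mono' atTop ?_ (tendsto_atTop_add_const_right atTop (-c) tendsto_id)
  filter_upwards [eventually_ge_atTop 0] with x hx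
  simp only [den, id]
  nlinarith [mul_nonneg hx (sq_nonneg (x - 3 / 4))]

lemma tendsto_approx_atTop (c : ℝ) : Tendsto (approx c) atTop (𝓝 0) :=
  (tendsto_den_atTop c).inv_tendsto_atTop.congr fun _ => (one_div _).symm

lemma approx_sub_lt {x : ℝ} (hx : 1 ≤ x) :
    approx (3 / 2) x - approx (3 / 2) (x + 2) < 1 / x ^ 3 - 1 / (x + 1) ^ 3 := by
  have h1 := den_pos (by norm_num : (3 / 2 : ℝ) ≤ 3) hx
  have h2 := den_pos (by norm_num : (3 / 2 : ℝ) ≤ 3) (by linarith : 1 ≤ x + 2)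
  have hy : (0 : ℝ) ≤ x - 1 := by linarith
  unfold approx den at *
  rw [div_sub_div _ _ h1.ne' h2.ne', div_sub_div _ _ (by positivity) (by positivity),
    div_lt_div_iff₀ (by positivity) (by positivity)]
  nlinarith [pow_nonneg hy 2, pow_nonneg hy 3, pow_nonneg hy 4, pow_nonneg hy 5]

lemma lt_approx_sub {x : ℝ} (hx : 7 ≤ x) :
    1 / x ^ 3 - 1 / (x + 1) ^ 3 < approx (5 / 2) x - approx (5 / 2) (x + 2) := by
  have h1 := den_pos (by norm_num : (5 / 2 : ℝ) ≤ 3) (by linarith : 1 ≤ x)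
  have h2 := den_pos (by norm_num : (5 / 2 : ℝ) ≤ 3) (by linarith : 1 ≤ x + 2)
  have hy : (0 : ℝ) ≤ x - 7 := by linarith
  unfold approx den at *
  rw [div_sub_div _ _ h1.ne' h2.ne', div_sub_div _ _ (by positivity) (by positivity),
    div_lt_div_iff₀ (by positivity) (by positivity)]
  nlinarith [pow_nonneg hy 2, pow_nonneg hy 3, pow_nonneg hy 4, pow_nonneg hy 5]

lemma hasSum_approx_sub {c a : ℝ} (hc : c ≤ 3) (ha : 1 ≤ a) :
    HasSum (fun j : ℕ => approx c (a + 2 * j) - approx c (a + 2 * j + 2)) (approx c a) := by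
  have hmem : ∀ j : ℕ, a + 2 * j ∈ Set.Ici (1 : ℝ) := fun j => by
    simp only [Set.mem_Ici]; linarith [j.cast_nonneg (α := ℝ)]
  have hanti : Antitone fun j : ℕ => approx c (a + 2 * j) := fun i j hij =>
    approx_antitoneOn hc (hmem i) (hmem j) (by gcongr)
  have hlim : Tendsto (fun j : ℕ => approx c (a + 2 * j)) atTop (𝓝 0) :=
    (tendsto_approx_atTop c).comp <| tendsto_atTop_add_const_left _ a <|
      tendsto_natCast_atTop_atTop.const_mul_atTop two_pos
  convert hasSum_sub_succ_of_antitone hanti hlim using 1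
  · ext j; push_cast; ring_nf
  · simp

lemma summable_alternating_inv_cube (n : ℕ) :
    Summable fun k : ℕ => (-1 : ℝ) ^ (n + k + 1) / ((n : ℝ) + k) ^ 3 := by
  refine Summable.of_norm ?_
  have h := (summable_nat_add_iff (f := fun m : ℕ => 1 / (m : ℝ) ^ 3) n).2
    (Real.summable_one_div_nat_pow.2 (by norm_num))
  refine h.congr fun k => ?_
  rw [norm_div, norm_pow, norm_neg, norm_one, one_pow, norm_pow,
    Real.norm_of_nonneg (by positivity)]
  push_cast
  ring

lemma hasSum_alternating_inv_cube_pairs {n : ℕ} (hodd : Odd n) :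
    HasSum (fun j : ℕ => 1 / ((n : ℝ) + 2 * j) ^ 3 - 1 / ((n : ℝ) + 2 * j + 1) ^ 3)
      (∑' k : ℕ, (-1 : ℝ) ^ (n + k + 1) / ((n : ℝ) + k) ^ 3) := by
  refine (summable_alternating_inv_cube n).hasSum_add_pairs.congr_fun fun j => ?_
  have heven : (-1 : ℝ) ^ (n + 2 * j + 1) = 1 :=
    (hodd.add_even (even_two_mul j)).add_one.neg_one_pow
  have hodd' : (-1 : ℝ) ^ (n + (2 * j + 1) + 1) = -1 := by
    rw [show n + (2 * j + 1) + 1 = n + 2 * j + 1 + 1 by ring, pow_succ, heven, one_mul]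
  simp only [heven, hodd']
  push_cast
  ring

lemma approx_lt_tsum_alternating_inv_cube {n : ℕ} (hodd : Odd n) :
    approx (3 / 2) n < ∑' k : ℕ, (-1 : ℝ) ^ (n + k + 1) / ((n : ℝ) + k) ^ 3 := by
  have hn : (1 : ℝ) ≤ n := by exact_mod_cast hodd.pos
  have hx : ∀ j : ℕ, (1 : ℝ) ≤ n + 2 * j := fun j => by linarith [j.cast_nonneg (α := ℝ)]
  exact hasSum_lt (fun j => (approx_sub_lt (hx j)).le) (approx_sub_lt (hx 0))
    (hasSum_approx_sub (by norm_num) hn) (hasSum_alternating_inv_cube_pairs hodd)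

lemma tsum_alternating_inv_cube_lt_approx {n : ℕ} (hn : 7 ≤ n) (hodd : Odd n) :
    ∑' k : ℕ, (-1 : ℝ) ^ (n + k + 1) / ((n : ℝ) + k) ^ 3 < approx (5 / 2) n := by
  have hn' : (7 : ℝ) ≤ n := by exact_mod_cast hn
  have hx : ∀ j : ℕ, (7 : ℝ) ≤ n + 2 * j := fun j => by linarith [j.cast_nonneg (α := ℝ)]
  exact hasSum_lt (fun j => (lt_approx_sub (hx j)).le) (lt_approx_sub (hx 0))
    (hasSum_alternating_inv_cube_pairs hodd) (hasSum_approx_sub (by norm_num) (by linarith))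

end ZetaTail

open ZetaTail

theorem stmt_15 (n : ℕ) (hn : 7 ≤ n) (hodd : Odd n) :
    (1 / (2 * (n : ℝ)^3 - 3 * n^2 + (9/2) * n - 3/2) <
        ∑' k : ℕ, (-1 : ℝ) ^ (n + k + 1) / (n + k) ^ 3 ∧
      ∑' k : ℕ, (-1 : ℝ) ^ (n + k + 1) / (n + k) ^ 3 <
        1 / (2 * n^3 - 3 * n^2 + (9/2) * n - 5/2)) ∧
    (⌊(∑' k : ℕ, (-1 : ℝ) ^ (n + k + 1) / (n + k) ^ 3)⁻¹⌋ : ℝ) =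
      2 * n^3 - 3 * n^2 + (9/2) * n - 5/2 := by
  have hlo := approx_lt_tsum_alternating_inv_cube hodd
  have hhi := tsum_alternating_inv_cube_lt_approx hn hodd
  refine ⟨⟨hlo, hhi⟩, ?_⟩
  obtain ⟨t, ht⟩ := hodd
  have hnt : (n : ℝ) = 2 * t + 1 := by exact_mod_cast ht
  set m : ℤ := 2 * n ^ 3 - 3 * n ^ 2 + 9 * t + 2
  have hm : (m : ℝ) = den (5 / 2) n := by simp only [m, den]; push_cast; rw [hnt]; ring
  have hm_pos : 0 < m :=
    Int.cast_pos.1 <| hm ▸ den_pos (by norm_num) (by exact_mod_cast (show 1 ≤ n by omega))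
  have hm_succ : (m : ℝ) + 1 = den (3 / 2) n := by rw [hm]; simp only [den]; ring
  rw [Int.floor_inv_eq_of_lt_of_lt hm_pos (by rwa [hm_succ]) (by rwa [hm]), hm]
  rfl

end
end

section
/- For every even integer n ≥ 10, the tail ζ*_n(4) = Σ_{k=n}^∞ (-1)^{k+1}/k^4 satisfies -1/(2n^4-4n^3+8n^2-6n-8) < ζ*_n(4) < -1/(2n^4-4n^3+8n^2-6n-7), and consequently ⌊ζ*_n(4)^{-1}⌋ = -(2n^4-4n^3+8n^2-6n-7). -/
open Filter Finset

/-- D_c(m) = 2m^4 - 4m^3 + 8m^2 - 6m - c -/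
private noncomputable def Dc (c m : ℝ) : ℝ := 2*m^4 - 4*m^3 + 8*m^2 - 6*m - c

private lemma Dc_pos {c m : ℝ} (hc : c ≤ 8) (hm : 10 ≤ m) : 0 < Dc c m := by
  unfold Dc; nlinarith [sq_nonneg m, sq_nonneg (m - 10)]

private lemma Dc_ge {c m : ℝ} (hc : c ≤ 8) (hm : 10 ≤ m) : m ≤ Dc c m := by
  unfold Dc; nlinarith [sq_nonneg m, sq_nonneg (m - 10)]

private lemma Dc_mono {c m : ℝ} (hm : 10 ≤ m) : Dc c m ≤ Dc c (m + 2) := by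
  unfold Dc; nlinarith [sq_nonneg m, sq_nonneg (m - 10)]

/-- key upper-bound termwise inequality (c = 8). -/
private lemma key8 {m : ℝ} (hm : 10 ≤ m) :
    1/m^4 - 1/(m+1)^4 < 1/Dc 8 m - 1/Dc 8 (m+2) := by
  have hm0 : (0:ℝ) < m := by linarith
  have h1 : (0:ℝ) < (m+1)^4 := by positivity
  have h2 : (0:ℝ) < m^4 := by positivity
  have hC : 0 < Dc 8 m := Dc_pos le_rfl hm
  have hE : 0 < Dc 8 (m+2) := Dc_pos le_rfl (by linarith)
  rw [div_sub_div _ _ (ne_of_gt h2) (ne_of_gt h1), div_sub_div _ _ (ne_of_gt hC) (ne_of_gt hE),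
    div_lt_div_iff₀ (by positivity) (by positivity)]
  unfold Dc
  nlinarith [pow_pos hm0 2, pow_pos hm0 3, pow_pos hm0 4, pow_pos hm0 5, hm0]

/-- key lower-bound termwise inequality (c = 7). -/
private lemma key7 {m : ℝ} (hm : 10 ≤ m) :
    1/Dc 7 m - 1/Dc 7 (m+2) < 1/m^4 - 1/(m+1)^4 := by
  have hm0 : (0:ℝ) < m := by linarith
  have h1 : (0:ℝ) < (m+1)^4 := by positivity
  have h2 : (0:ℝ) < m^4 := by positivity
  have hC : 0 < Dc 7 m := Dc_pos (by norm_num) hm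
  have hE : 0 < Dc 7 (m+2) := Dc_pos (by norm_num) (by linarith)
  have ht : (0:ℝ) ≤ m - 10 := by linarith
  rw [div_sub_div _ _ (ne_of_gt hC) (ne_of_gt hE), div_sub_div _ _ (ne_of_gt h2) (ne_of_gt h1),
    div_lt_div_iff₀ (by positivity) (by positivity)]
  unfold Dc
  nlinarith [pow_nonneg ht 7, pow_nonneg ht 6, pow_nonneg ht 5, pow_nonneg ht 4,
    pow_nonneg ht 3, pow_nonneg ht 2, ht]

/-- telescoping: if g is nonneg, decreasing and tends to 0, then ∑ (g j - g (j+1)) = g 0. -/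
private lemma tele {g : ℕ → ℝ} (h0 : ∀ j, 0 ≤ g j) (hd : ∀ j, g (j+1) ≤ g j)
    (hlim : Tendsto g atTop (nhds 0)) :
    Summable (fun j => g j - g (j+1)) ∧ ∑' j, (g j - g (j+1)) = g 0 := by
  have hsum : ∀ N, ∑ i ∈ range N, (g i - g (i+1)) = g 0 - g N := fun N =>
    Finset.sum_range_sub' g N
  have hS : Summable (fun j => g j - g (j+1)) := by
    apply summable_of_sum_range_le (c := g 0) (fun j => by linarith [hd j])
    intro N; rw [hsum N]; linarith [h0 N]
  refine ⟨hS, ?_⟩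
  have h1 : Tendsto (fun N => ∑ i ∈ range N, (g i - g (i+1))) atTop (nhds (g 0)) := by
    simp only [hsum]
    simpa using tendsto_const_nhds.sub hlim
  exact tendsto_nhds_unique hS.hasSum.tendsto_sum_nat h1

theorem stmt_16 (n : ℕ) (hn : 10 ≤ n) (hev : Even n) :
    (-1 / (2 * (n : ℝ)^4 - 4 * n^3 + 8 * n^2 - 6 * n - 8) <
        ∑' k : ℕ, (-1 : ℝ) ^ (n + k + 1) / (n + k) ^ 4 ∧
      ∑' k : ℕ, (-1 : ℝ) ^ (n + k + 1) / (n + k) ^ 4 <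
        -1 / (2 * n^4 - 4 * n^3 + 8 * n^2 - 6 * n - 7)) ∧
    ⌊(∑' k : ℕ, (-1 : ℝ) ^ (n + k + 1) / (n + k) ^ 4)⁻¹⌋ =
      -(2 * (n : ℤ)^4 - 4 * n^3 + 8 * n^2 - 6 * n - 7) := by
  have hN : (10:ℝ) ≤ (n:ℝ) := by exact_mod_cast hn
  -- the basic comparison summable series
  have hbase : Summable (fun k : ℕ => 1 / ((k:ℝ)+1)^2) := by
    have h1 := (Real.summable_one_div_nat_pow (p := 2)).2 (by norm_num)
    have h2 := (summable_nat_add_iff 1).2 h1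
    simpa [Nat.cast_add] using h2
  have haux : ∀ a : ℝ, 1 ≤ a → Summable (fun j : ℕ => 1 / (a + 2*(j:ℝ))^4) := by
    intro a ha
    apply hbase.of_nonneg_of_le (fun j => by positivity)
    intro j
    have hj0 : (0:ℝ) ≤ (j:ℝ) := Nat.cast_nonneg j
    have hj : ((j:ℝ)+1) ≤ a + 2*j := by linarith
    apply one_div_le_one_div_of_le (by positivity)
    calc ((j:ℝ)+1)^2 ≤ (a + 2*j)^2 := by nlinarith
      _ ≤ (a + 2*j)^4 := by
        have h1 : (1:ℝ) ≤ a + 2*j := by linarith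
        exact pow_le_pow_right₀ h1 (by norm_num)
  set u : ℕ → ℝ := fun j => 1 / ((n:ℝ) + 2*(j:ℝ))^4 with hu_def
  set v : ℕ → ℝ := fun j => 1 / ((n:ℝ) + 2*(j:ℝ) + 1)^4 with hv_def
  have hu : Summable u := haux _ (by linarith)
  have hv : Summable v := by
    have := haux ((n:ℝ)+1) (by linarith)
    apply this.congr
    intro j; simp only [hv_def]; ring_nf
  have hT : Summable (fun j => u j - v j) := hu.sub hv
  set T : ℝ := ∑' j, (u j - v j) with hT_def
  -- identify the alternating tail with -T
  set f : ℕ → ℝ := fun k => (-1 : ℝ) ^ (n + k + 1) / ((n:ℝ) + (k:ℝ)) ^ 4 with hf_def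
  have hfe : (fun j => f (2*j)) = fun j => -u j := by
    funext j
    have hodd : Odd (n + 2*j + 1) := by
      rcases hev with ⟨t, ht⟩
      exact ⟨t + j, by omega⟩
    simp only [hf_def, hu_def, hodd.neg_one_pow]
    push_cast
    ring
  have hfo : (fun j => f (2*j+1)) = fun j => v j := by
    funext j
    have heven : Even (n + (2*j+1) + 1) := by
      rcases hev with ⟨t, ht⟩
      exact ⟨t + j + 1, by omega⟩
    simp only [hf_def, hv_def, heven.neg_one_pow]
    push_cast
    ring
  have hSf : HasSum f (-∑' j, u j + ∑' j, v j) := by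
    refine HasSum.even_add_odd ?_ ?_
    · rw [hfe]; exact hu.hasSum.neg
    · rw [hfo]; exact hv.hasSum
  have hSval : ∑' k, f k = -T := by
    rw [hSf.tsum_eq, hT_def, Summable.tsum_sub hu hv]; ring
  -- telescoping sums
  have hm10 : ∀ j : ℕ, (10:ℝ) ≤ (n:ℝ) + 2*j := fun j => by
    have : (0:ℝ) ≤ (j:ℝ) := Nat.cast_nonneg j; linarith
  have htele : ∀ c : ℝ, c ≤ 8 →
      Summable (fun j : ℕ => 1/Dc c ((n:ℝ) + 2*j) - 1/Dc c ((n:ℝ) + 2*(j+1 : ℕ))) ∧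
      ∑' j : ℕ, (1/Dc c ((n:ℝ) + 2*j) - 1/Dc c ((n:ℝ) + 2*(j+1 : ℕ))) = 1/Dc c (n:ℝ) := by
    intro c hc
    have hpos : ∀ j : ℕ, 0 < Dc c ((n:ℝ) + 2*j) := fun j => Dc_pos hc (hm10 j)
    have h0 : ∀ j : ℕ, 0 ≤ 1/Dc c ((n:ℝ) + 2*j) := fun j => le_of_lt (by
      exact one_div_pos.mpr (hpos j))
    have hstep : ∀ j : ℕ, ((n:ℝ) + 2*((j+1 : ℕ):ℝ)) = ((n:ℝ) + 2*j) + 2 := by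
      intro j; push_cast; ring
    have hd : ∀ j : ℕ, 1/Dc c ((n:ℝ) + 2*(j+1 : ℕ)) ≤ 1/Dc c ((n:ℝ) + 2*j) := by
      intro j
      rw [hstep j]
      exact one_div_le_one_div_of_le (hpos j) (Dc_mono (hm10 j))
    have hlim : Tendsto (fun j : ℕ => 1/Dc c ((n:ℝ) + 2*j)) atTop (nhds 0) := by
      apply squeeze_zero h0 (g := fun j : ℕ => 1/((j:ℝ)+1))
      · intro j
        apply one_div_le_one_div_of_le (by positivity)
        refine le_trans ?_ (Dc_ge hc (hm10 j))
        have : (0:ℝ) ≤ (j:ℝ) := Nat.cast_nonneg j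
        linarith
      · exact tendsto_one_div_add_atTop_nhds_zero_nat
    have := tele h0 hd hlim
    simpa using this
  obtain ⟨hS7, hV7⟩ := htele 7 (by norm_num)
  obtain ⟨hS8, hV8⟩ := htele 8 le_rfl
  -- strict bounds on T
  have hlow : 1/Dc 7 (n:ℝ) < T := by
    rw [← hV7, hT_def]
    refine Summable.tsum_lt_tsum (i := 0) (fun j => ?_) ?_ hS7 hT
    · have h := key7 (hm10 j)
      have hstep : ((n:ℝ) + 2*((j+1 : ℕ):ℝ)) = ((n:ℝ) + 2*j) + 2 := by push_cast; ring
      rw [hstep]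
      simp only [hu_def, hv_def]
      linarith [h]
    · have h := key7 (hm10 0)
      have hstep : ((n:ℝ) + 2*((0+1 : ℕ):ℝ)) = ((n:ℝ) + 2*(0:ℕ)) + 2 := by push_cast; ring
      rw [hstep]
      simp only [hu_def, hv_def]
      push_cast
      simpa using h
  have hhigh : T < 1/Dc 8 (n:ℝ) := by
    rw [← hV8, hT_def]
    refine Summable.tsum_lt_tsum (i := 0) (fun j => ?_) ?_ hT hS8
    · have h := key8 (hm10 j)
      have hstep : ((n:ℝ) + 2*((j+1 : ℕ):ℝ)) = ((n:ℝ) + 2*j) + 2 := by push_cast; ring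
      rw [hstep]
      simp only [hu_def, hv_def]
      linarith [h]
    · have h := key8 (hm10 0)
      have hstep : ((n:ℝ) + 2*((0+1 : ℕ):ℝ)) = ((n:ℝ) + 2*(0:ℕ)) + 2 := by push_cast; ring
      rw [hstep]
      simp only [hu_def, hv_def]
      push_cast
      simpa using h
  have hD7 : 0 < Dc 7 (n:ℝ) := Dc_pos (by norm_num) hN
  have hD8 : 0 < Dc 8 (n:ℝ) := Dc_pos le_rfl hN
  have hTpos : 0 < T := lt_trans (one_div_pos.mpr hD7) hlow
  -- match the goal's tsum with f
  have hgoal : (∑' k : ℕ, (-1 : ℝ) ^ (n + k + 1) / ((n:ℝ) + (k:ℝ)) ^ 4) = -T := hSval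
  have hD7eq : Dc 7 (n:ℝ) = 2 * (n:ℝ)^4 - 4 * (n:ℝ)^3 + 8 * (n:ℝ)^2 - 6 * (n:ℝ) - 7 := rfl
  have hD8eq : Dc 8 (n:ℝ) = 2 * (n:ℝ)^4 - 4 * (n:ℝ)^3 + 8 * (n:ℝ)^2 - 6 * (n:ℝ) - 8 := rfl
  constructor
  · constructor
    · rw [hgoal, ← hD8eq, neg_div]
      rw [neg_lt_neg_iff]
      simpa [one_div] using hhigh
    · rw [hgoal, ← hD7eq, neg_div]
      rw [neg_lt_neg_iff]
      simpa [one_div] using hlow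
  · -- floor computation
    have hinv1 : 1/T < Dc 7 (n:ℝ) := (one_div_lt hTpos hD7).mpr hlow
    have hinv2 : Dc 8 (n:ℝ) < 1/T := (lt_one_div hD8 hTpos).mpr hhigh
    rw [hgoal]
    have hSinv : (-T)⁻¹ = -(1/T) := by
      rw [inv_neg, one_div]
    rw [hSinv]
    rw [Int.floor_eq_iff]
    constructor
    · push_cast
      rw [← hD7eq] at *
      push_cast
      nlinarith [hinv1, hD7eq]
    · push_cast
      have h8 : Dc 8 (n:ℝ) = Dc 7 (n:ℝ) - 1 := by unfold Dc; ring
      rw [h8] at hinv2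
      rw [hD7eq] at hinv2
      linarith [hinv2]
end

section
/- For every odd integer n ≥ 11, the tail ζ*_n(4) = Σ_{k=n}^∞ (-1)^{k+1}/k^4 satisfies 1/(2n^4-4n^3+8n^2-6n-7) < ζ*_n(4) < 1/(2n^4-4n^3+8n^2-6n-8), and consequently ⌊ζ*_n(4)^{-1}⌋ = 2n^4-4n^3+8n^2-6n-8. -/
/-!
For odd `n` the tail pairs up as `ζ*_n(4) = ∑ⱼ (x⁻⁴ - (x+1)⁻⁴)` with `x = n + 2j`, while for each `c`
the series `∑ⱼ (1/Q(x) - 1/Q(x+2))`, `Q = tailDenom c`, telescopes to `1/Q(n)`. For `x ≥ 11` the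
pair `x⁻⁴ - (x+1)⁻⁴` lies strictly between the telescoping terms for `c = 7` and `c = 8` (a
polynomial inequality), so summing gives the two bounds, and these trap `ζ*_n(4)⁻¹` in the interval
`(tailDenom 8 n, tailDenom 7 n)` of length one.
-/

open Filter Topology

theorem Summable.hasSum_pairs_alternating {a : ℕ → ℝ} (ha : Summable a) :
    HasSum (fun j => a (2 * j) - a (2 * j + 1)) (∑' k, (-1) ^ k * a k) := by
  have he : Summable fun j => a (2 * j) :=
    ha.comp_injective (mul_right_injective₀ two_ne_zero)
  have ho : Summable fun j => a (2 * j + 1) :=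
    ha.comp_injective ((add_left_injective 1).comp (mul_right_injective₀ two_ne_zero))
  rw [← tsum_even_add_odd (by simpa [pow_mul] using he) (by simpa [pow_succ, pow_mul] using ho.neg)]
  simpa [pow_succ, pow_mul, tsum_neg, sub_eq_add_neg] using he.hasSum.sub ho.hasSum

theorem Antitone.hasSum_sub_succ {f : ℕ → ℝ} (hf : Antitone f) (h0 : Tendsto f atTop (𝓝 0)) :
    HasSum (fun j => f j - f (j + 1)) (f 0) := by
  rw [hasSum_iff_tendsto_nat_of_nonneg (fun j => sub_nonneg.2 (hf j.le_succ))]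
  simp only [Finset.sum_range_sub']
  simpa using tendsto_const_nhds.sub h0

theorem Int.floor_inv_eq_of_lt_of_le {K : Type*} [Field K] [LinearOrder K] [IsStrictOrderedRing K]
    [FloorRing K] {x : K} {m : ℤ} (hm : 0 < m) (hlo : 1 / (m + 1) < x) (hhi : x ≤ 1 / m) :
    ⌊x⁻¹⌋ = m := by
  have hm' : (0 : K) < m := by exact_mod_cast hm
  have hx : 0 < x := lt_trans (by positivity) hlo
  rw [Int.floor_eq_iff, ← one_div, le_one_div hm' hx, one_div_lt hx (by positivity)]
  exact ⟨hhi, hlo⟩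

noncomputable def tailDenom (c x : ℝ) : ℝ := 2 * x ^ 4 - 4 * x ^ 3 + 8 * x ^ 2 - 6 * x - c

section tailDenom

variable {c x : ℝ}

theorem le_tailDenom (hc : c ≤ 8) (hx : 11 ≤ x) : x ≤ tailDenom c x := by
  unfold tailDenom; nlinarith [sq_nonneg x, sq_nonneg (x - 1)]

theorem tailDenom_pos (hc : c ≤ 8) (hx : 11 ≤ x) : 0 < tailDenom c x := by
  linarith [le_tailDenom hc hx]

theorem tailDenom_le_add_two (hx : 11 ≤ x) : tailDenom c x ≤ tailDenom c (x + 2) := by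
  unfold tailDenom; nlinarith [sq_nonneg x]

theorem hasSum_inv_tailDenom_sub (hc : c ≤ 8) (hx : 11 ≤ x) :
    HasSum (fun j : ℕ => 1 / tailDenom c (x + 2 * j) - 1 / tailDenom c (x + 2 * j + 2))
      (1 / tailDenom c x) := by
  have hxj (j : ℕ) : 11 ≤ x + 2 * j := by linarith [j.cast_nonneg (α := ℝ)]
  have hshift (j : ℕ) : x + 2 * ((j + 1 : ℕ) : ℝ) = x + 2 * j + 2 := by push_cast; ring
  set f : ℕ → ℝ := fun j => 1 / tailDenom c (x + 2 * j)
  have hf : Antitone f := antitone_nat_of_succ_le fun j => by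
    simp only [f, hshift]
    exact one_div_le_one_div_of_le (tailDenom_pos hc (hxj j)) (tailDenom_le_add_two (hxj j))
  have hf0 : Tendsto f atTop (𝓝 0) := by
    have hlin : Tendsto (fun j : ℕ => x + 2 * j) atTop atTop :=
      tendsto_atTop_add_const_left _ _
        (tendsto_natCast_atTop_atTop.const_mul_atTop two_pos)
    simpa [f, Function.comp_def] using tendsto_inv_atTop_zero.comp
      (tendsto_atTop_mono (fun j => le_tailDenom hc (hxj j)) hlin)
  simpa only [f, hshift, Nat.cast_zero, mul_zero, add_zero] using hf.hasSum_sub_succ hf0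

theorem inv_tailDenom_seven_sub_lt (hx : 11 ≤ x) :
    1 / tailDenom 7 x - 1 / tailDenom 7 (x + 2) < 1 / x ^ 4 - 1 / (x + 1) ^ 4 := by
  have h0 := tailDenom_pos (c := 7) (by norm_num) hx
  have h2 := tailDenom_pos (c := 7) (by norm_num) (by linarith : 11 ≤ x + 2)
  have hx0 : 0 < x := by linarith
  rw [div_sub_div _ _ h0.ne' h2.ne', div_sub_div _ _ (by positivity) (by positivity),
    div_lt_div_iff₀ (by positivity) (by positivity)]
  have ht : 0 ≤ x - 11 := by linarith
  unfold tailDenom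
  nlinarith [pow_nonneg ht 2, pow_nonneg ht 3, pow_nonneg ht 4, pow_nonneg ht 5,
    pow_nonneg ht 6, pow_nonneg ht 7]

theorem sub_lt_inv_tailDenom_eight_sub (hx : 11 ≤ x) :
    1 / x ^ 4 - 1 / (x + 1) ^ 4 < 1 / tailDenom 8 x - 1 / tailDenom 8 (x + 2) := by
  have h0 := tailDenom_pos le_rfl hx
  have h2 := tailDenom_pos le_rfl (by linarith : 11 ≤ x + 2)
  have hx0 : 0 < x := by linarith
  rw [div_sub_div _ _ (by positivity) (by positivity), div_sub_div _ _ h0.ne' h2.ne',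
    div_lt_div_iff₀ (by positivity) (by positivity)]
  unfold tailDenom
  nlinarith [pow_pos hx0 2, pow_pos hx0 3, pow_pos hx0 4, pow_pos hx0 5]

theorem inv_tailDenom_bounds_of_hasSum {S : ℝ} (hx : 11 ≤ x)
    (hS : HasSum (fun j : ℕ => 1 / (x + 2 * j) ^ 4 - 1 / (x + 2 * j + 1) ^ 4) S) :
    1 / tailDenom 7 x < S ∧ S < 1 / tailDenom 8 x := by
  have hxj (j : ℕ) : 11 ≤ x + 2 * j := by linarith [j.cast_nonneg (α := ℝ)]
  constructor
  · exact hasSum_lt (fun j => (inv_tailDenom_seven_sub_lt (hxj j)).le)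
      (inv_tailDenom_seven_sub_lt (hxj 0)) (hasSum_inv_tailDenom_sub (by norm_num) hx) hS
  · exact hasSum_lt (fun j => (sub_lt_inv_tailDenom_eight_sub (hxj j)).le)
      (sub_lt_inv_tailDenom_eight_sub (hxj 0)) hS (hasSum_inv_tailDenom_sub le_rfl hx)

end tailDenom

theorem hasSum_alternating_tail_pairs {n : ℕ} (hodd : Odd n) :
    HasSum (fun j : ℕ => 1 / ((n : ℝ) + 2 * j) ^ 4 - 1 / ((n : ℝ) + 2 * j + 1) ^ 4)
      (∑' k : ℕ, (-1 : ℝ) ^ (n + k + 1) / (n + k) ^ 4) := by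
  have hsum : Summable fun k : ℕ => 1 / ((n : ℝ) + k) ^ 4 := by
    simpa [add_comm] using
      (summable_nat_add_iff n).2 (Real.summable_one_div_nat_pow.2 (by norm_num : 1 < 4))
  have hsign (k : ℕ) : (-1 : ℝ) ^ (n + k + 1) = (-1) ^ k := by
    rw [add_right_comm, pow_add, (hodd.add_one).neg_one_pow, one_mul]
  simp only [hsign]
  have h := hsum.hasSum_pairs_alternating
  push_cast at h
  simpa only [add_assoc, mul_one_div] using h

theorem stmt_17 (n : ℕ) (hn : 11 ≤ n) (hodd : Odd n) :
    (1 / (2 * (n : ℝ)^4 - 4 * n^3 + 8 * n^2 - 6 * n - 7) <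
        ∑' k : ℕ, (-1 : ℝ) ^ (n + k + 1) / (n + k) ^ 4 ∧
      ∑' k : ℕ, (-1 : ℝ) ^ (n + k + 1) / (n + k) ^ 4 <
        1 / (2 * n^4 - 4 * n^3 + 8 * n^2 - 6 * n - 8)) ∧
    ⌊(∑' k : ℕ, (-1 : ℝ) ^ (n + k + 1) / (n + k) ^ 4)⁻¹⌋ =
      2 * (n : ℤ)^4 - 4 * n^3 + 8 * n^2 - 6 * n - 8 := by
  have hx : (11 : ℝ) ≤ n := by exact_mod_cast hn
  obtain ⟨hlo, hhi⟩ := inv_tailDenom_bounds_of_hasSum hx (hasSum_alternating_tail_pairs hodd)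
  have h8 := tailDenom_pos le_rfl hx
  unfold tailDenom at hlo hhi h8
  refine ⟨⟨hlo, hhi⟩, Int.floor_inv_eq_of_lt_of_le ?_ ?_ ?_⟩
  · exact_mod_cast h8
  · push_cast
    rwa [show (2 * n ^ 4 - 4 * n ^ 3 + 8 * n ^ 2 - 6 * n - 8 + 1 : ℝ) =
      2 * n ^ 4 - 4 * n ^ 3 + 8 * n ^ 2 - 6 * n - 7 by ring]
  · push_cast; exact hhi.le
end
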